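/- arXiv:0712.1180 — 3 statements merged into one kernel-verified Lean document; each statement's English description precedes it below -/
import Mathlib

section
/- Let U ⊆ ℝᵐ be open and B : U → GL(m, ℝ) a C² map with right Cartan connection C_x(v) = B(x)⁻¹ · (DB(x))(v) and affine torsion 2-forms T_x(u, v) = C_x(u)·v − C_x(v)·u. Then the exterior derivative of the affine torsion (the 'fluid mass-current' 3-form) satisfies, for all x ∈ U and u, v, w ∈ ℝᵐ: the cyclic sum over (u, v, w) of D(x ↦ T_x(v, w))(x)(u) equals minus the cyclic sum over (u, v, w) of (C_x(u)·C_x(v) − C_x(v)·C_x(u))·w; that is, d(C∧dx) = dC∧dx = −(C∧C)∧dx. -/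
attribute [local instance] Matrix.normedAddCommGroup Matrix.normedSpace

open scoped Matrix

/-- The right Cartan connection of a basis frame `B`: `C_x(v) = B(x)⁻¹ · (DB(x))(v)`. -/
noncomputable def rightCartan {m : ℕ} (B : (Fin m → ℝ) → Matrix (Fin m) (Fin m) ℝ)
    (x v : Fin m → ℝ) : Matrix (Fin m) (Fin m) ℝ :=
  (B x)⁻¹ * fderiv ℝ B x v

/-- The vector of affine torsion 2-forms `T = C ∧ dx` of the right Cartan connection:
`T_x(u,v) = C_x(u)·v − C_x(v)·u`. -/
noncomputable def affineTorsion {m : ℕ} (B : (Fin m → ℝ) → Matrix (Fin m) (Fin m) ℝ)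
    (x u v : Fin m → ℝ) : Fin m → ℝ :=
  rightCartan B x u *ᵥ v - rightCartan B x v *ᵥ u

/-!
Since `D(B⁻¹) = -B⁻¹ (DB) B⁻¹`, the product rule gives the structure equation
`D(C(a))(b) = B⁻¹ D²B(b, a) - C(b) C(a)`. In the cyclic sum of `D(T(v, w))(u)` the
second-derivative terms cancel in pairs by the symmetry of `D²B`, and what is left is
`-[C(u), C(v)] w` and its cyclic permutations.
-/

section BilinearProductRule

variable {𝕜 : Type*} [NontriviallyNormedField 𝕜] [CompleteSpace 𝕜]
  {E M N P : Type*} [NormedAddCommGroup E] [NormedSpace 𝕜 E]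
  [NormedAddCommGroup M] [NormedSpace 𝕜 M] [FiniteDimensional 𝕜 M]
  [NormedAddCommGroup N] [NormedSpace 𝕜 N] [FiniteDimensional 𝕜 N]
  [NormedAddCommGroup P] [NormedSpace 𝕜 P]
  (L : M →ₗ[𝕜] N →ₗ[𝕜] P) {f : E → M} {g : E → N} {x : E}

theorem LinearMap.differentiableAt_bilinear (hf : DifferentiableAt 𝕜 f x)
    (hg : DifferentiableAt 𝕜 g x) : DifferentiableAt 𝕜 (fun y => L (f y) (g y)) x :=
  (L.toContinuousBilinearMap.hasFDerivAt_of_bilinear hf.hasFDerivAt hg.hasFDerivAt).differentiableAt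

theorem LinearMap.fderiv_bilinear_apply (hf : DifferentiableAt 𝕜 f x)
    (hg : DifferentiableAt 𝕜 g x) (v : E) :
    fderiv 𝕜 (fun y => L (f y) (g y)) x v = L (fderiv 𝕜 f x v) (g x) + L (f x) (fderiv 𝕜 g x v) := by
  rw [show (fun y => L (f y) (g y)) = fun y => L.toContinuousBilinearMap (f y) (g y) from rfl,
    L.toContinuousBilinearMap.fderiv_of_bilinear hf hg]
  simp [add_comm]

end BilinearProductRule

theorem RingEquiv.map_ringInverse {R S : Type*} [Ring R] [Ring S] (e : R ≃+* S) (a : R) :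
    e (Ring.inverse a) = Ring.inverse (e a) := by
  by_cases ha : IsUnit a
  · obtain ⟨u, rfl⟩ := ha
    rw [Ring.inverse_unit]
    exact (Ring.inverse_unit (Units.map (e : R →* S) u)).symm
  · rw [Ring.inverse_non_unit a ha, Ring.inverse_non_unit _ (by simpa using ha), map_zero]

section MatrixCalculus

variable {𝕜 : Type*} [RCLike 𝕜] {n : Type*} [Fintype n]
  {E : Type*} [NormedAddCommGroup E] [NormedSpace 𝕜 E] {f g : E → Matrix n n 𝕜} {x : E}

theorem DifferentiableAt.matrix_mul (hf : DifferentiableAt 𝕜 f x) (hg : DifferentiableAt 𝕜 g x) :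
    DifferentiableAt 𝕜 (fun y => f y * g y) x :=
  (LinearMap.mul 𝕜 (Matrix n n 𝕜)).differentiableAt_bilinear hf hg

theorem fderiv_matrix_mul_apply (hf : DifferentiableAt 𝕜 f x) (hg : DifferentiableAt 𝕜 g x)
    (v : E) : fderiv 𝕜 (fun y => f y * g y) x v = fderiv 𝕜 f x v * g x + f x * fderiv 𝕜 g x v :=
  (LinearMap.mul 𝕜 (Matrix n n 𝕜)).fderiv_bilinear_apply hf hg v

theorem DifferentiableAt.matrix_mulVec_const (hf : DifferentiableAt 𝕜 f x) (w : n → 𝕜) :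
    DifferentiableAt 𝕜 (fun y => f y *ᵥ w) x :=
  (Matrix.mulVecBilin 𝕜 𝕜).differentiableAt_bilinear hf (differentiableAt_const w)

theorem fderiv_matrix_mulVec_const_apply (hf : DifferentiableAt 𝕜 f x) (w : n → 𝕜) (v : E) :
    fderiv 𝕜 (fun y => f y *ᵥ w) x v = fderiv 𝕜 f x v *ᵥ w := by
  have h := (Matrix.mulVecBilin 𝕜 𝕜).fderiv_bilinear_apply hf (differentiableAt_const w) v
  simp only [Matrix.mulVecBilin_apply, fderiv_fun_const, Pi.zero_apply, zero_apply,
    Matrix.mulVec_zero, add_zero] at h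
  exact h

/- Mathlib's calculus lemmas put the topology of `Matrix.normedAddCommGroup` on matrices, while
elaboration finds `instTopologicalSpaceMatrix`; the two agree only after unfolding a `def`, so
`rw` cannot pass between them. Restating a library lemma and proving it by the library term
bridges the gap; for the same reason several proofs below chain equations with `Eq.trans`. -/
theorem differentiableAt_fderiv_apply_const (hf : DifferentiableAt 𝕜 (fderiv 𝕜 f) x) (a : E) :
    DifferentiableAt 𝕜 (fun y => fderiv 𝕜 f y a) x :=
  hf.clm_apply (differentiableAt_const a)

theorem fderiv_fderiv_apply_const (hf : DifferentiableAt 𝕜 (fderiv 𝕜 f) x) (a b : E) :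
    fderiv 𝕜 (fun y => fderiv 𝕜 f y a) x b = fderiv 𝕜 (fderiv 𝕜 f) x b a :=
  DFunLike.congr_fun
    (((ContinuousLinearMap.apply 𝕜 (Matrix n n 𝕜) a).hasFDerivAt.comp x hf.hasFDerivAt).fderiv) b

variable [DecidableEq n]

namespace Matrix

/- The entrywise norm on matrices is not submultiplicative, so the calculus of inversion is
transported from the Banach algebra of operators on `EuclideanSpace 𝕜 n`. -/
noncomputable def toEuclideanCLE :
    Matrix n n 𝕜 ≃L[𝕜] (EuclideanSpace 𝕜 n →L[𝕜] EuclideanSpace 𝕜 n) :=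
  (toEuclideanCLM (n := n) (𝕜 := 𝕜)).toAlgEquiv.toLinearEquiv.toContinuousLinearEquiv

theorem toEuclideanCLE_mul (A C : Matrix n n 𝕜) :
    toEuclideanCLE (A * C) = toEuclideanCLE A * toEuclideanCLE C :=
  map_mul (toEuclideanCLM (n := n) (𝕜 := 𝕜)) A C

theorem inv_eq_toEuclideanCLE_symm_ringInverse (A : Matrix n n 𝕜) :
    A⁻¹ = toEuclideanCLE.symm (Ring.inverse (toEuclideanCLE A)) := by
  rw [nonsing_inv_eq_ringInverse, ContinuousLinearEquiv.eq_symm_apply]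
  exact RingEquiv.map_ringInverse (toEuclideanCLM (n := n) (𝕜 := 𝕜)).toRingEquiv A

theorem differentiableAt_inv {A : Matrix n n 𝕜} (hA : IsUnit A) :
    DifferentiableAt 𝕜 (Inv.inv : Matrix n n 𝕜 → Matrix n n 𝕜) A := by
  have hA' : IsUnit (toEuclideanCLE A) := hA.map (toEuclideanCLM (n := n) (𝕜 := 𝕜))
  have h := (differentiableAt_inverse (𝕜 := 𝕜) hA').comp A
    (toEuclideanCLE (n := n) (𝕜 := 𝕜)).differentiableAt
  have h' := (toEuclideanCLE (n := n) (𝕜 := 𝕜)).symm.differentiableAt.comp A h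
  exact h'.congr_of_eventuallyEq (.of_forall inv_eq_toEuclideanCLE_symm_ringInverse)

theorem fderiv_inv_apply {A : Matrix n n 𝕜} (hA : IsUnit A) (t : Matrix n n 𝕜) :
    fderiv 𝕜 (Inv.inv : Matrix n n 𝕜 → Matrix n n 𝕜) A t = -(A⁻¹ * t * A⁻¹) := by
  obtain ⟨u, hu⟩ := hA.map (toEuclideanCLM (n := n) (𝕜 := 𝕜))
  have hu_inv : ((u⁻¹ : (EuclideanSpace 𝕜 n →L[𝕜] EuclideanSpace 𝕜 n)ˣ) : _) =
      toEuclideanCLE A⁻¹ := by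
    rw [inv_eq_toEuclideanCLE_symm_ringInverse, ContinuousLinearEquiv.apply_symm_apply,
      ← Ring.inverse_unit, hu]
    rfl
  have hR := hasFDerivAt_ringInverse (𝕜 := 𝕜) u
  rw [hu_inv, show (u : EuclideanSpace 𝕜 n →L[𝕜] EuclideanSpace 𝕜 n) = toEuclideanCLE A
    from hu] at hR
  have h := hR.comp A (toEuclideanCLE (n := n) (𝕜 := 𝕜)).hasFDerivAt
  have h' := (toEuclideanCLE (n := n) (𝕜 := 𝕜)).symm.hasFDerivAt.comp A h
  have h_inv : HasFDerivAt (Inv.inv : Matrix n n 𝕜 → Matrix n n 𝕜) _ A :=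
    h'.congr_of_eventuallyEq (.of_forall inv_eq_toEuclideanCLE_symm_ringInverse)
  refine (DFunLike.congr_fun h_inv.fderiv t).trans ?_
  change toEuclideanCLE.symm
    (-(toEuclideanCLE A⁻¹ * toEuclideanCLE t * toEuclideanCLE A⁻¹)) = _
  rw [← toEuclideanCLE_mul, ← toEuclideanCLE_mul, ← map_neg,
    ContinuousLinearEquiv.symm_apply_apply]

end Matrix

theorem DifferentiableAt.matrix_inv (hf : DifferentiableAt 𝕜 f x) (hfx : IsUnit (f x)) :
    DifferentiableAt 𝕜 (fun y => (f y)⁻¹) x :=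
  (Matrix.differentiableAt_inv hfx).comp x hf

theorem fderiv_matrix_inv_apply (hf : DifferentiableAt 𝕜 f x) (hfx : IsUnit (f x)) (v : E) :
    fderiv 𝕜 (fun y => (f y)⁻¹) x v = -((f x)⁻¹ * fderiv 𝕜 f x v * (f x)⁻¹) :=
  (DFunLike.congr_fun (fderiv_comp x (Matrix.differentiableAt_inv hfx) hf) v).trans
    (Matrix.fderiv_inv_apply hfx _)

end MatrixCalculus

section RightCartan

variable {m : ℕ} {B : (Fin m → ℝ) → Matrix (Fin m) (Fin m) ℝ} {x : Fin m → ℝ}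

theorem differentiableAt_rightCartan (hB : ContDiffAt ℝ 2 B x) (hBx : IsUnit (B x))
    (a : Fin m → ℝ) : DifferentiableAt ℝ (fun y => rightCartan B y a) x :=
  ((hB.differentiableAt two_ne_zero).matrix_inv hBx).matrix_mul
    (differentiableAt_fderiv_apply_const
      ((hB.fderiv_right (m := 1) le_rfl).differentiableAt one_ne_zero) a)

theorem fderiv_rightCartan_apply (hB : ContDiffAt ℝ 2 B x) (hBx : IsUnit (B x))
    (a b : Fin m → ℝ) :
    fderiv ℝ (fun y => rightCartan B y a) x b =
      (B x)⁻¹ * fderiv ℝ (fderiv ℝ B) x b a - rightCartan B x b * rightCartan B x a := by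
  have hB₁ := hB.differentiableAt two_ne_zero
  have hB₂ := (hB.fderiv_right (m := 1) le_rfl).differentiableAt one_ne_zero
  have h := fderiv_matrix_mul_apply (hB₁.matrix_inv hBx) (differentiableAt_fderiv_apply_const hB₂ a) b
  rw [fderiv_matrix_inv_apply hB₁ hBx, fderiv_fderiv_apply_const hB₂] at h
  simp only [rightCartan]
  rw [h]
  noncomm_ring

theorem fderiv_affineTorsion_apply (hB : ContDiffAt ℝ 2 B x) (hBx : IsUnit (B x))
    (a b c : Fin m → ℝ) :
    fderiv ℝ (fun y => affineTorsion B y a b) x c =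
      ((B x)⁻¹ * fderiv ℝ (fderiv ℝ B) x c a) *ᵥ b - ((B x)⁻¹ * fderiv ℝ (fderiv ℝ B) x c b) *ᵥ a
        - (rightCartan B x c * rightCartan B x a) *ᵥ b
        + (rightCartan B x c * rightCartan B x b) *ᵥ a := by
  have hCa := differentiableAt_rightCartan hB hBx a
  have hCb := differentiableAt_rightCartan hB hBx b
  refine (DFunLike.congr_fun
    (fderiv_sub (hCa.matrix_mulVec_const b) (hCb.matrix_mulVec_const a)) c).trans ?_
  rw [sub_apply, fderiv_matrix_mulVec_const_apply hCa, fderiv_matrix_mulVec_const_apply hCb,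
    fderiv_rightCartan_apply hB hBx, fderiv_rightCartan_apply hB hBx]
  simp only [Matrix.sub_mulVec]
  abel

end RightCartan

theorem affineTorsion_exterior_derivative_general (m : ℕ)
    (U : Set (Fin m → ℝ)) (hU : IsOpen U)
    (B : (Fin m → ℝ) → Matrix (Fin m) (Fin m) ℝ)
    (hB : ContDiffOn ℝ 2 B U)
    (hBinv : ∀ x ∈ U, IsUnit (B x)) :
    ∀ x ∈ U, ∀ u v w : Fin m → ℝ,
      fderiv ℝ (fun y => affineTorsion B y v w) x u
        + fderiv ℝ (fun y => affineTorsion B y w u) x v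
        + fderiv ℝ (fun y => affineTorsion B y u v) x w
      = -((rightCartan B x u * rightCartan B x v
              - rightCartan B x v * rightCartan B x u) *ᵥ w
          + (rightCartan B x v * rightCartan B x w
              - rightCartan B x w * rightCartan B x v) *ᵥ u
          + (rightCartan B x w * rightCartan B x u
              - rightCartan B x u * rightCartan B x w) *ᵥ v) := by
  intro x hx u v w
  have hBx : ContDiffAt ℝ 2 B x := hB.contDiffAt (hU.mem_nhds hx)
  have hsymm : ∀ a b, fderiv ℝ (fderiv ℝ B) x a b = fderiv ℝ (fderiv ℝ B) x b a :=
    hBx.isSymmSndFDerivAt (by simp)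
  rw [fderiv_affineTorsion_apply hBx (hBinv x hx), fderiv_affineTorsion_apply hBx (hBinv x hx),
    fderiv_affineTorsion_apply hBx (hBinv x hx), hsymm v u, hsymm w v, hsymm u w]
  simp only [Matrix.sub_mulVec, neg_add]
  abel

/-- For a C² frame field `B : U → GL(m, ℝ)` on an open `U ⊆ ℝᵐ`, the exterior
derivative of the affine torsion satisfies `d(C∧dx) = dC∧dx = −(C∧C)∧dx`: the cyclic sum
over `(u,v,w)` of `D(x ↦ T_x(v,w))(x)(u)` equals minus the cyclic sum over `(u,v,w)` of
`(C_x(u)·C_x(v) − C_x(v)·C_x(u))·w`. -/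
theorem affineTorsion_exterior_derivative (m : ℕ) (hm : 1 ≤ m)
    (U : Set (Fin m → ℝ)) (hU : IsOpen U)
    (B : (Fin m → ℝ) → Matrix (Fin m) (Fin m) ℝ)
    (hB : ContDiffOn ℝ 2 B U)
    (hBinv : ∀ x ∈ U, IsUnit (B x)) :
    ∀ x ∈ U, ∀ u v w : Fin m → ℝ,
      fderiv ℝ (fun y => affineTorsion B y v w) x u
        + fderiv ℝ (fun y => affineTorsion B y w u) x v
        + fderiv ℝ (fun y => affineTorsion B y u v) x w
      = -((rightCartan B x u * rightCartan B x v
              - rightCartan B x v * rightCartan B x u) *ᵥ w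
          + (rightCartan B x v * rightCartan B x w
              - rightCartan B x w * rightCartan B x v) *ᵥ u
          + (rightCartan B x w * rightCartan B x u
              - rightCartan B x u * rightCartan B x w) *ᵥ v) :=
  affineTorsion_exterior_derivative_general m U hU B hB hBinv
end

section
/- Let m ≥ 1, let a₁, …, a_m be real constants, let p be a positive even integer, and let N be a real number. On the open set U = { x ∈ ℝᵐ : a₁x₁ᵖ + ⋯ + a_m x_mᵖ > 0 } define λ(x) = (a₁x₁ᵖ + ⋯ + a_m x_mᵖ)^{N/p}, and let M(x) be the m×m Jacobian matrix of the map x ↦ x/λ(x), with entries M(x)ᵢⱼ = ∂/∂xᵢ ( xⱼ / λ(x) ). Then the characteristic polynomial of M(x) factors as det( γ·I − M(x) ) = ( γ − 1/λ(x) )^{m−1} · ( γ − (1−N)/λ(x) ); equivalently, the eigenvalues of M(x) are 1/λ(x) with multiplicity m−1 and (1−N)/λ(x) with multiplicity 1, i.e., (γλ − 1)^{m−1}(γλ − 1 + N) = 0. -/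
/-!
Write `1/λ = g`, so that the field is `x ↦ g(x) x` and its Jacobian is the rank-one perturbation
`g(x) I + (∇g(x)) xᵀ` of a scalar matrix. The characteristic polynomial of a rank-one matrix
`u vᵀ` is `X^{m-1}(X - u ⬝ v)`, so the eigenvalues are `g(x)` (multiplicity `m - 1`) and
`g(x) + ∇g(x) ⬝ x`. Since `g` is positively homogeneous of degree `-N`, Euler's identity gives
`∇g(x) ⬝ x = -N g(x)`.
-/

open Matrix

theorem Matrix.det_smul_one_sub_vecMulVec {n R : Type*} [Fintype n] [DecidableEq n] [Nonempty n]
    [CommRing R] (c : R) (u v : n → R) :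
    (c • (1 : Matrix n n R) - vecMulVec u v).det = c ^ (Fintype.card n - 1) * (c - u ⬝ᵥ v) := by
  have hcard : Fintype.card n = Fintype.card n - 1 + 1 := (Nat.sub_add_cancel Fintype.card_pos).symm
  rw [smul_one_eq_diagonal, ← scalar_apply, ← eval_charpoly, charpoly_vecMulVec]
  conv_lhs => rw [hcard]
  simp only [Polynomial.eval_sub, Polynomial.eval_smul, Polynomial.eval_pow, Polynomial.eval_X,
    Nat.add_sub_cancel, smul_eq_mul]
  ring

theorem dotProduct_apply_single {R ι F : Type*} [CommSemiring R] [Fintype ι] [DecidableEq ι]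
    [FunLike F (ι → R) R] [LinearMapClass F R (ι → R) R] (f : F) (x : ι → R) :
    (fun i => f (Pi.single i 1)) ⬝ᵥ x = f x := by
  conv_rhs => rw [← Finset.univ_sum_single x, map_sum]
  refine Finset.sum_congr rfl fun i _ => ?_
  have hsingle : Pi.single i (x i) = x i • Pi.single i (1 : R) := by
    rw [← Pi.single_smul, smul_eq_mul, mul_one]
  rw [hsingle, map_smul, smul_eq_mul, mul_comm]

theorem fderiv_apply_mul_apply_single {𝕜 ι : Type*} [NontriviallyNormedField 𝕜] [Fintype ι]
    [DecidableEq ι] {g : (ι → 𝕜) → 𝕜} {x : ι → 𝕜} (hg : DifferentiableAt 𝕜 g x) (i j : ι) :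
    fderiv 𝕜 (fun y => y j * g y) x (Pi.single i 1) =
      (g x • (1 : Matrix ι ι 𝕜) + vecMulVec (fun i => fderiv 𝕜 g x (Pi.single i 1)) x) i j := by
  rw [fderiv_fun_mul (differentiableAt_apply j x) hg, (hasFDerivAt_apply j x).fderiv]
  simp only [_root_.add_apply, _root_.smul_apply, smul_eq_mul,
    ContinuousLinearMap.proj_apply, Pi.single_apply, eq_comm, mul_ite, mul_one, mul_zero,
    Matrix.add_apply, Matrix.smul_apply, one_apply, vecMulVec_apply]
  ring

theorem fderiv_apply_self_of_homogeneous {E F : Type*} [NormedAddCommGroup E] [NormedSpace ℝ E]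
    [NormedAddCommGroup F] [NormedSpace ℝ F] {g : E → F} {x : E} {k : ℝ}
    (hg : DifferentiableAt ℝ g x) (hhom : ∀ t : ℝ, 0 < t → g (t • x) = t ^ k • g x) :
    fderiv ℝ g x x = k • g x := by
  have hray : HasDerivAt (fun t : ℝ => g (t • x)) (fderiv ℝ g x x) 1 := by
    have hline : HasDerivAt (fun t : ℝ => t • x) x 1 := by
      simpa using (hasDerivAt_id (1 : ℝ)).smul_const x
    exact hg.hasFDerivAt.comp_hasDerivAt_of_eq 1 hline (one_smul ℝ x).symm
  have hpow : HasDerivAt (fun t : ℝ => t ^ k • g x) (k • g x) 1 := by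
    simpa using (Real.hasDerivAt_rpow_const (x := 1) (p := k) (Or.inl one_ne_zero)).smul_const (g x)
  have heq : (fun t : ℝ => g (t • x)) =ᶠ[nhds 1] fun t => t ^ k • g x :=
    (lt_mem_nhds one_pos).mono hhom
  exact hray.unique (hpow.congr_of_eventuallyEq heq)

section HolderNorm

variable {ι : Type*} [Fintype ι] (a : ι → ℝ) (p : ℕ) (N : ℝ)

noncomputable def holderNorm (x : ι → ℝ) : ℝ := (∑ i, a i * x i ^ p) ^ (N / p)

variable {a p N}

theorem holderNorm_smul (hp : p ≠ 0) {x : ι → ℝ} (hx : 0 ≤ ∑ i, a i * x i ^ p) {t : ℝ}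
    (ht : 0 < t) : holderNorm a p N (t • x) = t ^ N * holderNorm a p N x := by
  have hsum : ∑ i, a i * (t • x) i ^ p = t ^ p * ∑ i, a i * x i ^ p := by
    simp only [Pi.smul_apply, smul_eq_mul, mul_pow, Finset.mul_sum, mul_left_comm]
  rw [holderNorm, hsum, Real.mul_rpow (pow_nonneg ht.le p) hx, ← Real.rpow_natCast_mul ht.le,
    mul_div_cancel₀ _ (Nat.cast_ne_zero.mpr hp), holderNorm]

theorem differentiableAt_holderNorm {x : ι → ℝ} (hx : ∑ i, a i * x i ^ p ≠ 0) :
    DifferentiableAt ℝ (holderNorm a p N) x :=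
  DifferentiableAt.rpow_const (by fun_prop) (Or.inl hx)

end HolderNorm

theorem holder_jacobian_charpoly_general (m : ℕ) (a : Fin m → ℝ)
    (p : ℕ) (hp : 0 < p) (N : ℝ)
    (lam : (Fin m → ℝ) → ℝ)
    (hlam : ∀ x, lam x = (∑ i, a i * x i ^ p) ^ (N / (p : ℝ)))
    (M : (Fin m → ℝ) → Matrix (Fin m) (Fin m) ℝ)
    (hM : ∀ x i j, M x i j = fderiv ℝ (fun y => y j / lam y) x (Pi.single i 1)) :
    ∀ x : Fin m → ℝ, 0 < ∑ i, a i * x i ^ p →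
      ∀ γ : ℝ,
        (γ • (1 : Matrix (Fin m) (Fin m) ℝ) - M x).det =
          (γ - 1 / lam x) ^ (m - 1) * (γ - (1 - N) / lam x) := by
  intro x hx γ
  obtain rfl : lam = holderNorm a p N := funext hlam
  have : Nonempty (Fin m) := by
    by_contra hempty
    simp [not_nonempty_iff.mp hempty] at hx
  set g : (Fin m → ℝ) → ℝ := fun y => (holderNorm a p N y)⁻¹
  have hpos : 0 < holderNorm a p N x := Real.rpow_pos_of_pos hx _
  have hg : DifferentiableAt ℝ g x := (differentiableAt_holderNorm hx.ne').inv hpos.ne'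
  have heuler : fderiv ℝ g x x = -N * g x := by
    refine fderiv_apply_self_of_homogeneous hg fun t ht => ?_
    simp only [g, holderNorm_smul hp.ne' hx.le ht, mul_inv, Real.rpow_neg ht.le, smul_eq_mul]
  have hMx : M x = g x • 1 + vecMulVec (fun i => fderiv ℝ g x (Pi.single i 1)) x := by
    ext i j
    simp only [hM, div_eq_mul_inv]
    exact fderiv_apply_mul_apply_single hg i j
  rw [hMx, sub_add_eq_sub_sub, ← sub_smul, det_smul_one_sub_vecMulVec, dotProduct_apply_single,
    heuler, Fintype.card_fin]
  simp only [g, one_div]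
  ring

/-- For the Hölder norm `λ(x) = (a₁x₁ᵖ + ⋯ + a_m x_mᵖ)^{N/p}` and the
Jacobian matrix `M(x)ᵢⱼ = ∂ᵢ(xⱼ/λ(x))` of the renormalized position field `x ↦ x/λ(x)`,
the characteristic polynomial factors on the set where `a₁x₁ᵖ + ⋯ + a_m x_mᵖ > 0` as
`det(γ·I − M(x)) = (γ − 1/λ(x))^{m−1} · (γ − (1−N)/λ(x))`, i.e. the eigenvalues are
`1/λ` with multiplicity `m−1` and `(1−N)/λ` with multiplicity `1`. -/
theorem holder_jacobian_charpoly (m : ℕ) (hm : 1 ≤ m) (a : Fin m → ℝ)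
    (p : ℕ) (hp : 0 < p) (hpe : Even p) (N : ℝ)
    (lam : (Fin m → ℝ) → ℝ)
    (hlam : ∀ x, lam x = (∑ i, a i * x i ^ p) ^ (N / (p : ℝ)))
    (M : (Fin m → ℝ) → Matrix (Fin m) (Fin m) ℝ)
    (hM : ∀ x i j, M x i j = fderiv ℝ (fun y => y j / lam y) x (Pi.single i 1)) :
    ∀ x : Fin m → ℝ, 0 < ∑ i, a i * x i ^ p →
      ∀ γ : ℝ,
        (γ • (1 : Matrix (Fin m) (Fin m) ℝ) - M x).det =
          (γ - 1 / lam x) ^ (m - 1) * (γ - (1 - N) / lam x) :=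
  holder_jacobian_charpoly_general m a p hp N lam hlam M hM
end

section
/- Let U ⊆ ℝᵈ be open, let φ, χ : U → ℝ be C² functions, let a, ε be real constants and p a positive even integer, and suppose λ(x) = ( a·φ(x)ᵖ + ε·χ(x)ᵖ )^{2/p} is defined and nonvanishing on U (i.e., aφᵖ + εχᵖ > 0 on U). Define the 1-form J with components J_k = ( φ ∂_k χ − χ ∂_k φ ) / λ. Then J is closed: ∂_j J_k − ∂_k J_j = 0 on U for all indices j, k; i.e., dJ = d( (φ dχ − χ dφ)/λ ) = 0, even though neither term φ dχ/λ nor χ dφ/λ need be closed. -/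
/-!
Write `B = aφᵖ + εχᵖ` and `λ = B^{2/p}`. Then `dλ = α dφ + β dχ` with `α = 2aφᵖ⁻¹B^{2/p-1}`,
`β = 2εχᵖ⁻¹B^{2/p-1}`, and Euler's relation for the degree-2 homogeneity of `λ` in `(φ, χ)`
reads `αφ + βχ = 2λ`. For the numerator `W = φ dχ - χ dφ` one has `dW = 2 dφ ∧ dχ`, and
`dλ ∧ W = (αφ + βχ) dφ ∧ dχ = 2λ dφ ∧ dχ`, so `d(W/λ) = (λ dW - dλ ∧ W)/λ² = 0`.
-/

namespace HolderCurrent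

variable {E : Type*} [NormedAddCommGroup E] [NormedSpace ℝ E]

noncomputable def dirWronskian (φ χ : E → ℝ) (v : E) (y : E) : ℝ :=
  φ y * fderiv ℝ χ y v - χ y * fderiv ℝ φ y v

theorem hasFDerivAt_fderiv_apply {f : E → ℝ} {x : E} (hf : ContDiffAt ℝ 2 f x) (v : E) :
    HasFDerivAt (fun y => fderiv ℝ f y v)
      ((ContinuousLinearMap.apply ℝ ℝ v).comp (fderiv ℝ (fderiv ℝ f) x)) x :=
  (ContinuousLinearMap.apply ℝ ℝ v).hasFDerivAt.comp x
    ((hf.fderiv_right (m := 1) (by norm_num)).differentiableAt one_ne_zero).hasFDerivAt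

theorem hasFDerivAt_dirWronskian {φ χ : E → ℝ} {x : E} (hφ : ContDiffAt ℝ 2 φ x)
    (hχ : ContDiffAt ℝ 2 χ x) (v : E) :
    HasFDerivAt (dirWronskian φ χ v)
      ((φ x • (ContinuousLinearMap.apply ℝ ℝ v).comp (fderiv ℝ (fderiv ℝ χ) x)
          + fderiv ℝ χ x v • fderiv ℝ φ x)
        - (χ x • (ContinuousLinearMap.apply ℝ ℝ v).comp (fderiv ℝ (fderiv ℝ φ) x)
          + fderiv ℝ φ x v • fderiv ℝ χ x)) x :=
  ((hφ.differentiableAt two_ne_zero).hasFDerivAt.mul (hasFDerivAt_fderiv_apply hχ v)).sub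
    ((hχ.differentiableAt two_ne_zero).hasFDerivAt.mul (hasFDerivAt_fderiv_apply hφ v))

theorem fderiv_dirWronskian_antisymm {φ χ : E → ℝ} {x : E} (hφ : ContDiffAt ℝ 2 φ x)
    (hχ : ContDiffAt ℝ 2 χ x) (v w : E) :
    fderiv ℝ (dirWronskian φ χ v) x w - fderiv ℝ (dirWronskian φ χ w) x v
      = 2 * (fderiv ℝ φ x w * fderiv ℝ χ x v - fderiv ℝ φ x v * fderiv ℝ χ x w) := by
  rw [(hasFDerivAt_dirWronskian hφ hχ v).fderiv, (hasFDerivAt_dirWronskian hφ hχ w).fderiv]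
  have hsφ := hφ.isSymmSndFDerivAt (by simp) v w
  have hsχ := hχ.isSymmSndFDerivAt (by simp) v w
  simp only [sub_apply, add_apply, smul_apply, ContinuousLinearMap.coe_comp, Function.comp_apply,
    ContinuousLinearMap.apply_apply, smul_eq_mul]
  rw [hsφ, hsχ]
  ring

theorem fderiv_div_apply {f g : E → ℝ} {g' : E →L[ℝ] ℝ} {x : E} (hf : DifferentiableAt ℝ f x)
    (hg : HasFDerivAt g g' x) (hg0 : g x ≠ 0) (w : E) :
    fderiv ℝ (fun y => f y / g y) x w = (fderiv ℝ f x w * g x - f x * g' w) / g x ^ 2 := by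
  have h : HasFDerivAt (fun y => f y * (g y)⁻¹) _ x :=
    hf.hasFDerivAt.mul ((hasDerivAt_inv hg0).comp_hasFDerivAt x hg)
  simp only [div_eq_mul_inv]
  rw [h.fderiv]
  simp only [add_apply, smul_apply, smul_eq_mul]
  field_simp
  ring

theorem fderiv_dirWronskian_div_antisymm {φ χ lam : E → ℝ} {α β : ℝ} {x : E}
    (hφ : ContDiffAt ℝ 2 φ x) (hχ : ContDiffAt ℝ 2 χ x)
    (hlam : HasFDerivAt lam (α • fderiv ℝ φ x + β • fderiv ℝ χ x) x) (hlam0 : lam x ≠ 0)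
    (heuler : α * φ x + β * χ x = 2 * lam x) (v w : E) :
    fderiv ℝ (fun y => dirWronskian φ χ v y / lam y) x w
      - fderiv ℝ (fun y => dirWronskian φ χ w y / lam y) x v = 0 := by
  have hW (u : E) : DifferentiableAt ℝ (dirWronskian φ χ u) x :=
    (hasFDerivAt_dirWronskian hφ hχ u).differentiableAt
  rw [fderiv_div_apply (hW v) hlam hlam0, fderiv_div_apply (hW w) hlam hlam0, div_sub_div_same,
    div_eq_zero_iff]
  left
  simp only [add_apply, smul_apply, smul_eq_mul, dirWronskian]
  linear_combination lam x * fderiv_dirWronskian_antisymm hφ hχ v w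
    - (fderiv ℝ φ x w * fderiv ℝ χ x v - fderiv ℝ φ x v * fderiv ℝ χ x w) * heuler

noncomputable def holderNorm (a ε : ℝ) (p : ℕ) (φ χ : E → ℝ) (y : E) : ℝ :=
  (a * φ y ^ p + ε * χ y ^ p) ^ ((2 : ℝ) / p)

theorem exists_hasFDerivAt_holderNorm_euler {a ε : ℝ} {p : ℕ} {φ χ : E → ℝ} {x : E}
    (hp : p ≠ 0) (hpos : 0 < a * φ x ^ p + ε * χ x ^ p)
    (hφ : DifferentiableAt ℝ φ x) (hχ : DifferentiableAt ℝ χ x) :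
    ∃ α β : ℝ, HasFDerivAt (holderNorm a ε p φ χ) (α • fderiv ℝ φ x + β • fderiv ℝ χ x) x ∧
      α * φ x + β * χ x = 2 * holderNorm a ε p φ χ x := by
  set c := (a * φ x ^ p + ε * χ x ^ p) ^ ((2 : ℝ) / p - 1)
  have hpow (t : ℝ) : t ^ (p - 1) * t = t ^ p := by
    rw [← pow_succ, Nat.sub_add_cancel (Nat.pos_of_ne_zero hp)]
  refine ⟨2 * c * a * φ x ^ (p - 1), 2 * c * ε * χ x ^ (p - 1), ?_, ?_⟩
  · have hbase : HasFDerivAt (fun y => a * φ y ^ p + ε * χ y ^ p) _ x :=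
      ((hφ.hasFDerivAt.pow p).const_mul a).add ((hχ.hasFDerivAt.pow p).const_mul ε)
    refine (hbase.rpow_const (p := (2 : ℝ) / p) (Or.inl hpos.ne')).congr_fderiv ?_
    ext w
    simp only [add_apply, smul_apply, smul_eq_mul, nsmul_eq_mul, c]
    field_simp
  · have hc : c * (a * φ x ^ p + ε * χ x ^ p) = holderNorm a ε p φ χ x := by
      rw [holderNorm, ← Real.rpow_add_one hpos.ne']
      norm_num
    rw [← hc, ← hpow (φ x), ← hpow (χ x)]
    ring

end HolderCurrent

open HolderCurrent

theorem holder_current_closed_general (d : ℕ) (U : Set (Fin d → ℝ)) (hU : IsOpen U)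
    (φ χ : (Fin d → ℝ) → ℝ)
    (hφ : ContDiffOn ℝ 2 φ U) (hχ : ContDiffOn ℝ 2 χ U)
    (a ε : ℝ) (p : ℕ) (hp : 0 < p)
    (hpos : ∀ x ∈ U, 0 < a * φ x ^ p + ε * χ x ^ p)
    (lam : (Fin d → ℝ) → ℝ)
    (hlam : ∀ x, lam x = (a * φ x ^ p + ε * χ x ^ p) ^ ((2 : ℝ) / (p : ℝ)))
    (J : Fin d → (Fin d → ℝ) → ℝ)
    (hJ : ∀ k x, J k x =
      (φ x * fderiv ℝ χ x (Pi.single k 1) - χ x * fderiv ℝ φ x (Pi.single k 1)) / lam x) :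
    ∀ x ∈ U, ∀ j k : Fin d,
      fderiv ℝ (J k) x (Pi.single j 1) - fderiv ℝ (J j) x (Pi.single k 1) = 0 := by
  intro x hx j k
  have hφx : ContDiffAt ℝ 2 φ x := hφ.contDiffAt (hU.mem_nhds hx)
  have hχx : ContDiffAt ℝ 2 χ x := hχ.contDiffAt (hU.mem_nhds hx)
  have hlam_eq : lam = holderNorm a ε p φ χ := funext hlam
  have hJ_eq (m : Fin d) : J m = fun y => dirWronskian φ χ (Pi.single m 1) y / lam y :=
    funext (hJ m)
  obtain ⟨α, β, hderiv, heuler⟩ := exists_hasFDerivAt_holderNorm_euler hp.ne' (hpos x hx)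
    (hφx.differentiableAt two_ne_zero) (hχx.differentiableAt two_ne_zero)
  have hlam0 : holderNorm a ε p φ χ x ≠ 0 := (Real.rpow_pos_of_pos (hpos x hx) _).ne'
  rw [hJ_eq, hJ_eq, hlam_eq]
  exact fderiv_dirWronskian_div_antisymm hφx hχx hderiv hlam0 heuler _ _

/-- Let `φ, χ : U → ℝ` be C² on an open `U ⊆ ℝᵈ`, and let
`λ = (aφᵖ + εχᵖ)^{2/p}` be a nonvanishing Hölder norm on `U` (positive base).  Then the
1-form `J` with components `J_k = (φ ∂_k χ − χ ∂_k φ)/λ` is closed on `U`: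
`∂_j J_k − ∂_k J_j = 0`, even though neither term `φ dχ/λ` nor `χ dφ/λ` need be closed. -/
theorem holder_current_closed (d : ℕ) (U : Set (Fin d → ℝ)) (hU : IsOpen U)
    (φ χ : (Fin d → ℝ) → ℝ)
    (hφ : ContDiffOn ℝ 2 φ U) (hχ : ContDiffOn ℝ 2 χ U)
    (a ε : ℝ) (p : ℕ) (hp : 0 < p) (hpe : Even p)
    (hpos : ∀ x ∈ U, 0 < a * φ x ^ p + ε * χ x ^ p)
    (lam : (Fin d → ℝ) → ℝ)
    (hlam : ∀ x, lam x = (a * φ x ^ p + ε * χ x ^ p) ^ ((2 : ℝ) / (p : ℝ)))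
    (J : Fin d → (Fin d → ℝ) → ℝ)
    (hJ : ∀ k x, J k x =
      (φ x * fderiv ℝ χ x (Pi.single k 1) - χ x * fderiv ℝ φ x (Pi.single k 1)) / lam x) :
    ∀ x ∈ U, ∀ j k : Fin d,
      fderiv ℝ (J k) x (Pi.single j 1) - fderiv ℝ (J j) x (Pi.single k 1) = 0 :=
  holder_current_closed_general d U hU φ χ hφ hχ a ε p hp hpos lam hlam J hJ
end
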